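/- For every nonnegative integer M and fixed complex a, b, c, Γ(a+n)Γ(b+n)/Γ(c+n) = Σ_{m=0}^{M} (-1)^m (c-a)_m (c-b)_m / m! · Γ(a+b-c-m+n) + O(Γ(a+b-c-M-1+n)) as n → ∞ through the positive integers. -/

import Mathlib

/-!
Write `d = a + b - c` and `R_K(a, b, c)` for the remainder after `K` terms. From
`Γ(s + 1) = s Γ(s)` and `(a + n) (b + n) = (c + n) (d + n) + (c - a) (c - b)` one gets the recursion
`R_{K+1}(n + 1) = (d + n) R_{K+1}(n) + (c - a) (c - b) R_K(a, b, c + 1)(n)`, so the increments of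
`w = R_{K+1} / Γ(d + n)` are `(c - a) (c - b) R_K(a, b, c + 1) / Γ(d + n + 1)`. Inductively (in `K`,
for all `c` at once) these are `O(n ^ -(K + 2))`. Euler's limit formula gives
`Γ(a + n) Γ(b + n) ~ Γ(c + n) Γ(d + n)`, hence `w → 0`, and summing the increments from `n` to `∞`
gives `w = O(n ^ -(K + 1))`, i.e. `R_{K+1} = O(Γ(d - (K + 1) + n))`.
-/

open Complex Filter Asymptotics Polynomial

noncomputable def poch (x : ℂ) (m : ℕ) : ℂ := (ascPochhammer ℂ m).eval x

open Topology

lemma poch_succ_left (x : ℂ) (k : ℕ) : poch x (k + 1) = x * poch (x + 1) k := by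
  simp [poch, ascPochhammer_succ_left, eval_comp]

lemma poch_succ_right (x : ℂ) (k : ℕ) : poch x (k + 1) = poch x k * (x + k) :=
  ascPochhammer_succ_eval k x

lemma poch_eq_prod_range (x : ℂ) (k : ℕ) : poch x k = ∏ j ∈ Finset.range k, (x + j) := by
  induction k with
  | zero => simp [poch]
  | succ k ih => rw [poch_succ_right, ih, Finset.prod_range_succ]

theorem isBigO_sub_of_tendsto_of_isBigO_sub_succ {E : Type*} [NormedAddCommGroup E]
    {w : ℕ → E} {L : E} {q : ℕ} (hw : Tendsto w atTop (𝓝 L))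
    (hstep : (fun n => w (n + 1) - w n) =O[atTop] fun n => ((n : ℝ) ^ (q + 2))⁻¹) :
    (fun n => w n - L) =O[atTop] fun n => ((n : ℝ) ^ (q + 1))⁻¹ := by
  obtain ⟨C, hC₀, hC⟩ := hstep.exists_pos
  obtain ⟨N, hN⟩ := eventually_atTop.1 hC.bound
  refine IsBigO.of_bound (2 * C) ?_
  filter_upwards [eventually_ge_atTop (max N 1)] with n hn
  have hn₁ : 1 ≤ n := (le_max_right N 1).trans hn
  have hn₀ : (0 : ℝ) < n := by exact_mod_cast hn₁
  -- for `k ≥ n`, `1 / k ^ (q + 2) ≤ (1 / n ^ q) (1 / k ^ 2)`, and `∑_{k ≥ n} 1 / k ^ 2 ≤ 2 / n`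
  have hpartial : ∀ m ≥ n, ‖w m - w n‖ ≤ 2 * C * ((n : ℝ) ^ (q + 1))⁻¹ := by
    intro m hm
    calc ‖w m - w n‖ = dist (w n) (w m) := by rw [dist_comm, dist_eq_norm]
      _ ≤ ∑ k ∈ Finset.Ico n m, dist (w k) (w (k + 1)) := dist_le_Ico_sum_dist w hm
      _ ≤ ∑ k ∈ Finset.Ico n m, C * ((n : ℝ) ^ q)⁻¹ * ((k : ℝ) ^ 2)⁻¹ := by
          refine Finset.sum_le_sum fun k hk => ?_
          have hnk : n ≤ k := (Finset.mem_Ico.1 hk).1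
          have hk₀ : (0 : ℝ) < k := hn₀.trans_le (by exact_mod_cast hnk)
          rw [dist_comm, dist_eq_norm]
          refine (hN k ((le_max_left N 1).trans (hn.trans hnk))).trans ?_
          rw [norm_inv, norm_pow, Real.norm_natCast, pow_add, mul_inv, mul_assoc]
          gcongr
      _ ≤ ∑ k ∈ Finset.Ioo (n - 1) m, C * ((n : ℝ) ^ q)⁻¹ * ((k : ℝ) ^ 2)⁻¹ := by
          refine Finset.sum_le_sum_of_subset_of_nonneg (fun k hk => ?_) fun _ _ _ => by positivity
          simp only [Finset.mem_Ico, Finset.mem_Ioo] at hk ⊢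
          omega
      _ ≤ C * ((n : ℝ) ^ q)⁻¹ * (2 / n) := by
          rw [← Finset.mul_sum]
          gcongr
          simpa [Nat.cast_sub hn₁] using sum_Ioo_inv_sq_le (α := ℝ) (n - 1) m
      _ = 2 * C * ((n : ℝ) ^ (q + 1))⁻¹ := by
          field_simp
          ring
  have hlim := le_of_tendsto ((hw.sub_const (w n)).norm) (eventually_atTop.2 ⟨n, hpartial⟩)
  rw [norm_sub_rev] at hlim
  simpa using hlim

namespace Complex

lemma eventually_add_natCast_ne_neg_natCast (x : ℂ) :
    ∀ᶠ n : ℕ in atTop, ∀ k : ℕ, x + n ≠ -k := by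
  filter_upwards [tendsto_natCast_atTop_atTop.eventually_gt_atTop (-x.re)] with n hn k hk
  have := congrArg re hk
  simp only [add_re, natCast_re, neg_re] at this
  linarith [(k.cast_nonneg : (0 : ℝ) ≤ k)]

lemma Gamma_add_natCast_eq_poch_mul {x : ℂ} (hx : ∀ k : ℕ, x ≠ -k) (k : ℕ) :
    Gamma (x + k) = poch x k * Gamma x := by
  rw [poch, ← Gamma_add_nat_div_Gamma_eq x hx, div_mul_cancel₀ _ (Gamma_ne_zero hx)]

lemma isTheta_add_natCast (y : ℂ) : (fun n : ℕ => y + n) =Θ[atTop] fun n => (n : ℂ) := by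
  have hy : (fun _ : ℕ => y) =o[atTop] fun n => (n : ℂ) :=
    isLittleO_const_left.2 <| .inr <| by simpa [Function.comp_def] using tendsto_natCast_atTop_atTop
  exact hy.add_isTheta (isTheta_refl _ _)

lemma isTheta_poch_add_natCast (x : ℂ) (k : ℕ) :
    (fun n : ℕ => poch (x + n) k) =Θ[atTop] fun n => (n : ℂ) ^ k := by
  induction k with
  | zero => simp [poch, isTheta_refl]
  | succ k ih =>
    simp only [poch_succ_right, pow_succ]
    exact ih.mul (by simpa [add_right_comm] using isTheta_add_natCast (x + k))

lemma isTheta_Gamma_add_natCast_add (x : ℂ) (k : ℕ) :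
    (fun n : ℕ => Gamma (x + k + n)) =Θ[atTop] fun n => (n : ℂ) ^ k * Gamma (x + n) := by
  refine EventuallyEq.trans_isTheta ?_ ((isTheta_poch_add_natCast x k).mul (isTheta_refl _ _))
  filter_upwards [eventually_add_natCast_ne_neg_natCast x] with n hn
  rw [← Gamma_add_natCast_eq_poch_mul hn, add_right_comm]

lemma isLittleO_Gamma_add_natCast (x : ℂ) {k : ℕ} (hk : k ≠ 0) :
    (fun n : ℕ => Gamma (x + n)) =o[atTop] fun n => Gamma (x + k + n) := by
  have h : (fun _ : ℕ => (1 : ℂ)) =o[atTop] fun n => (n : ℂ) ^ k := by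
    refine (isLittleO_one_left_iff ℂ).2 ?_
    simp only [norm_pow, Complex.norm_natCast]
    exact (tendsto_pow_atTop hk).comp tendsto_natCast_atTop_atTop
  simpa using (h.mul_isBigO (isBigO_refl (fun n : ℕ => Gamma (x + n)) atTop)).trans_isTheta
    (isTheta_Gamma_add_natCast_add x k).symm

lemma tendsto_Gamma_add_natCast_div_cpow_mul_factorial {s : ℂ} (hs : ∀ k : ℕ, s ≠ -k) :
    Tendsto (fun n : ℕ => Gamma (s + (n + 1 : ℕ)) / ((n : ℂ) ^ s * n.factorial)) atTop (𝓝 1) := by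
  have h : (fun n : ℕ => Gamma (s + (n + 1 : ℕ)) / ((n : ℂ) ^ s * n.factorial)) =
      fun n => Gamma s / GammaSeq s n := by
    funext n
    rw [GammaSeq, div_div_eq_mul_div, Gamma_add_natCast_eq_poch_mul hs, poch_eq_prod_range,
      mul_comm]
  rw [h, ← div_self (Gamma_ne_zero hs)]
  exact tendsto_const_nhds.div (GammaSeq_tendsto_Gamma s) (Gamma_ne_zero hs)

lemma tendsto_Gamma_mul_Gamma_div_Gamma_mul_Gamma {a b c d : ℂ} (h : a + b = c + d) :
    Tendsto (fun n : ℕ => Gamma (a + n) * Gamma (b + n) / (Gamma (c + n) * Gamma (d + n)))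
      atTop (𝓝 1) := by
  obtain ⟨N, ha, hb, hc, hd⟩ := ((eventually_add_natCast_ne_neg_natCast a).and <|
    (eventually_add_natCast_ne_neg_natCast b).and <|
    (eventually_add_natCast_ne_neg_natCast c).and (eventually_add_natCast_ne_neg_natCast d)).exists
  -- after shifting by `N` Euler's limit formula applies, and the powers of `n` cancel
  -- because `a + b = c + d`
  rw [← tendsto_add_atTop_iff_nat (N + 1)]
  have key := ((tendsto_Gamma_add_natCast_div_cpow_mul_factorial ha).mul
    (tendsto_Gamma_add_natCast_div_cpow_mul_factorial hb)).div
    ((tendsto_Gamma_add_natCast_div_cpow_mul_factorial hc).mul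
      (tendsto_Gamma_add_natCast_div_cpow_mul_factorial hd)) (by norm_num)
  rw [show (1 : ℂ) * 1 / (1 * 1) = 1 by norm_num] at key
  refine key.congr' ?_
  filter_upwards [eventually_ge_atTop 1] with n hn
  have hn0 : (n : ℂ) ≠ 0 := by exact_mod_cast (Nat.one_le_iff_ne_zero.1 hn)
  have hpow : (n : ℂ) ^ (a + N) * (n : ℂ) ^ (b + N) = (n : ℂ) ^ (c + N) * (n : ℂ) ^ (d + N) := by
    rw [← cpow_add _ _ hn0, ← cpow_add _ _ hn0]
    congr 1
    linear_combination h
  have hshift : ∀ x : ℂ, x + ((n + (N + 1) : ℕ) : ℂ) = x + N + ((n + 1 : ℕ) : ℂ) := fun x => by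
    push_cast; ring
  have hne : (n : ℂ) ^ (c + N) * n.factorial * ((n : ℂ) ^ (d + N) * n.factorial) ≠ 0 := by
    have := Nat.factorial_ne_zero n
    simp [cpow_eq_zero_iff, hn0, this]
  have hden : (n : ℂ) ^ (a + N) * n.factorial * ((n : ℂ) ^ (b + N) * n.factorial) =
      (n : ℂ) ^ (c + N) * n.factorial * ((n : ℂ) ^ (d + N) * n.factorial) := by
    linear_combination (n.factorial : ℂ) ^ 2 * hpow
  simp only [Pi.div_apply, hshift, div_mul_div_comm]
  rw [hden, div_div_div_cancel_right₀ hne]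

lemma eventually_add_natCast_ne_zero (x : ℂ) : ∀ᶠ n : ℕ in atTop, x + n ≠ 0 :=
  (eventually_add_natCast_ne_neg_natCast x).mono fun _ h => by simpa using h 0

lemma eventually_Gamma_add_natCast_ne_zero (x : ℂ) : ∀ᶠ n : ℕ in atTop, Gamma (x + n) ≠ 0 :=
  (eventually_add_natCast_ne_neg_natCast x).mono fun _ h => Gamma_ne_zero h

lemma isTheta_natCast_pow_inv (k : ℕ) :
    (fun n : ℕ => ((n : ℂ) ^ k)⁻¹) =Θ[atTop] fun n => ((n : ℝ) ^ k)⁻¹ :=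
  IsTheta.of_norm_eventuallyEq (.of_forall fun n => by simp)

lemma isEquivalent_Gamma_mul_Gamma_div_Gamma (a b c : ℂ) :
    (fun n : ℕ => Gamma (a + n) * Gamma (b + n) / Gamma (c + n)) ~[atTop]
      fun n => Gamma (a + b - c + n) :=
  isEquivalent_of_tendsto_one <| by
    simpa only [Pi.div_def, div_div] using
      tendsto_Gamma_mul_Gamma_div_Gamma_mul_Gamma (d := a + b - c) (by ring)

-- from `x * y = z * (x + y - z) + (z - x) * (z - y)`
lemma Gamma_mul_Gamma_div_Gamma_add_one {x y z : ℂ} (hx : x ≠ 0) (hy : y ≠ 0) (hz : z ≠ 0) :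
    Gamma (x + 1) * Gamma (y + 1) / Gamma (z + 1) =
      (x + y - z) * (Gamma x * Gamma y / Gamma z) +
        (z - x) * (z - y) * (Gamma x * Gamma y / Gamma (z + 1)) := by
  rw [Gamma_add_one x hx, Gamma_add_one y hy, Gamma_add_one z hz]
  rcases eq_or_ne (Gamma z) 0 with hΓ | hΓ
  · simp [hΓ]
  · field_simp
    ring

end Complex

namespace GammaRatioExpansion

noncomputable def coeff (a b c : ℂ) (m : ℕ) : ℂ :=
  (-1) ^ m * poch (c - a) m * poch (c - b) m / m.factorial

noncomputable def partialSum (a b c : ℂ) (K n : ℕ) : ℂ :=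
  ∑ m ∈ Finset.range K, coeff a b c m * Gamma (a + b - c - m + n)

noncomputable def remainder (a b c : ℂ) (K n : ℕ) : ℂ :=
  Gamma (a + n) * Gamma (b + n) / Gamma (c + n) - partialSum a b c K n

variable (a b c : ℂ)

lemma coeff_zero : coeff a b c 0 = 1 := by
  simp [coeff, poch]

lemma coeff_succ (m : ℕ) :
    ((m : ℂ) + 1) * coeff a b c (m + 1) = -((c - a) * (c - b)) * coeff a b (c + 1) m := by
  rw [coeff, coeff, poch_succ_left, poch_succ_left, Nat.factorial_succ, pow_succ,
    show c + 1 - a = c - a + 1 by ring, show c + 1 - b = c - b + 1 by ring]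
  have hm : (m : ℂ) + 1 ≠ 0 := by exact_mod_cast m.succ_ne_zero
  have hf : (m.factorial : ℂ) ≠ 0 := by exact_mod_cast m.factorial_ne_zero
  push_cast
  field_simp

lemma partialSum_succ_add_one {K n : ℕ}
    (h : ∀ m ∈ Finset.range (K + 1), a + b - c - m + n ≠ 0) :
    partialSum a b c (K + 1) (n + 1) =
      (a + b - c + n) * partialSum a b c (K + 1) n +
        (c - a) * (c - b) * partialSum a b (c + 1) K n := by
  have hterm : ∀ m ∈ Finset.range (K + 1),
      coeff a b c m * Gamma (a + b - c - m + (n + 1 : ℕ)) =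
        (a + b - c + n) * (coeff a b c m * Gamma (a + b - c - m + n)) -
          m * coeff a b c m * Gamma (a + b - c - m + n) := fun m hm => by
    rw [Nat.cast_succ, ← add_assoc, Gamma_add_one _ (h m hm)]
    ring
  have hshift : ∀ m : ℕ,
      ((m + 1 : ℕ) : ℂ) * coeff a b c (m + 1) * Gamma (a + b - c - (m + 1 : ℕ) + n) =
      -((c - a) * (c - b) * (coeff a b (c + 1) m * Gamma (a + b - (c + 1) - m + n))) := fun m => by
    rw [Nat.cast_succ, coeff_succ, show a + b - c - ((m : ℂ) + 1) = a + b - (c + 1) - m by ring]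
    ring
  rw [partialSum, Finset.sum_congr rfl hterm, Finset.sum_sub_distrib, ← Finset.mul_sum,
    Finset.sum_range_succ' (fun m : ℕ => (m : ℂ) * coeff a b c m * Gamma (a + b - c - m + n)),
    Finset.sum_congr rfl fun m _ => hshift m, Finset.sum_neg_distrib,
    ← Finset.mul_sum]
  simp [partialSum]

lemma remainder_succ_add_one_eventuallyEq (K : ℕ) :
    (fun n => remainder a b c (K + 1) (n + 1)) =ᶠ[atTop] fun n =>
      (a + b - c + n) * remainder a b c (K + 1) n +
        (c - a) * (c - b) * remainder a b (c + 1) K n := by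
  have hsum : ∀ᶠ n : ℕ in atTop, ∀ m ∈ Finset.range (K + 1), a + b - c - m + n ≠ 0 :=
    (eventually_all_finset _).2 fun m _ => eventually_add_natCast_ne_zero _
  filter_upwards [hsum, eventually_add_natCast_ne_zero a, eventually_add_natCast_ne_zero b,
    eventually_add_natCast_ne_zero c] with n hsum ha hb hc
  rw [remainder, remainder, remainder, Nat.cast_succ, ← add_assoc, ← add_assoc, ← add_assoc,
    Gamma_mul_Gamma_div_Gamma_add_one ha hb hc, partialSum_succ_add_one a b c hsum,
    show c + n + 1 = c + 1 + n by ring]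
  ring

lemma remainder_succ_isLittleO (K : ℕ) :
    (fun n => remainder a b c (K + 1) n) =o[atTop] fun n => Gamma (a + b - c + n) := by
  have hterm : ∀ m ∈ Finset.range K, (fun n : ℕ => coeff a b c (m + 1) *
      Gamma (a + b - c - (m + 1 : ℕ) + n)) =o[atTop] fun n => Gamma (a + b - c + n) :=
    fun m _ => by
      simpa using (isLittleO_Gamma_add_natCast (a + b - c - (m + 1 : ℕ))
        m.succ_ne_zero).const_mul_left (coeff a b c (m + 1))
  have h := (isEquivalent_Gamma_mul_Gamma_div_Gamma a b c).isLittleO.sub (IsLittleO.sum hterm)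
  refine h.congr_left fun n => ?_
  simp only [Pi.sub_apply, Finset.sum_apply, remainder, partialSum, Finset.sum_range_succ',
    coeff_zero, Nat.cast_zero, sub_zero, one_mul]
  ring

lemma remainder_succ_div_Gamma_sub_isBigO {K : ℕ}
    (h : (fun n => remainder a b (c + 1) K n) =O[atTop] fun n => Gamma (a + b - (c + 1) - K + n)) :
    (fun n => remainder a b c (K + 1) (n + 1) / Gamma (a + b - c + (n + 1 : ℕ)) -
      remainder a b c (K + 1) n / Gamma (a + b - c + n)) =O[atTop]
      fun n => ((n : ℝ) ^ (K + 2))⁻¹ := by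
  set d := a + b - c
  set y := a + b - (c + 1) - K
  have hΘ := (isTheta_Gamma_add_natCast_add y (K + 2)).inv
  have hdy : ∀ n : ℕ, y + (K + 2 : ℕ) + n = d + (n + 1 : ℕ) := fun n => by
    simp only [y, d]; push_cast; ring
  simp only [hdy] at hΘ
  have hO := (h.const_mul_left ((c - a) * (c - b))).mul hΘ.isBigO
  refine (hO.congr' ?_ ?_).trans (isTheta_natCast_pow_inv (K + 2)).isBigO
  · filter_upwards [remainder_succ_add_one_eventuallyEq a b c K, eventually_add_natCast_ne_zero d,
      eventually_Gamma_add_natCast_ne_zero d] with n hrec hd₀ hΓ₀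
    have hrec' : remainder a b c (K + 1) (n + 1) = (d + n) * remainder a b c (K + 1) n +
        (c - a) * (c - b) * remainder a b (c + 1) K n := hrec
    rw [hrec', Nat.cast_succ, ← add_assoc, Gamma_add_one _ hd₀]
    field_simp
    ring
  · filter_upwards [eventually_ne_atTop 0, eventually_Gamma_add_natCast_ne_zero y] with n hn hy
    field_simp

lemma remainder_succ_isBigO {K : ℕ}
    (h : (fun n => remainder a b (c + 1) K n) =O[atTop] fun n => Gamma (a + b - (c + 1) - K + n)) :
    (fun n => remainder a b c (K + 1) n) =O[atTop]
      fun n => Gamma (a + b - c - (K + 1 : ℕ) + n) := by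
  have hw := isBigO_sub_of_tendsto_of_isBigO_sub_succ
    (remainder_succ_isLittleO a b c K).tendsto_div_nhds_zero
    (remainder_succ_div_Gamma_sub_isBigO a b c h)
  simp only [sub_zero] at hw
  have hΘ := isTheta_Gamma_add_natCast_add (a + b - c - (K + 1 : ℕ)) (K + 1)
  simp only [sub_add_cancel] at hΘ
  refine ((hw.trans (isTheta_natCast_pow_inv _).symm.isBigO).mul hΘ.isBigO).congr' ?_ ?_
  · filter_upwards [eventually_Gamma_add_natCast_ne_zero (a + b - c)] with n hn
    exact div_mul_cancel₀ _ hn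
  · filter_upwards [eventually_ne_atTop 0] with n hn
    field_simp

theorem remainder_isBigO (K : ℕ) :
    (fun n => remainder a b c K n) =O[atTop] fun n => Gamma (a + b - c - K + n) := by
  induction K generalizing c with
  | zero =>
    simpa [remainder, partialSum] using (isEquivalent_Gamma_mul_Gamma_div_Gamma a b c).isBigO
  | succ K ih => exact remainder_succ_isBigO a b c (ih (c + 1))

end GammaRatioExpansion

theorem gamma_ratio_expansion_gamma_form (a b c : ℂ) (M : ℕ) :
    (fun n : ℕ => Complex.Gamma (a + n) * Complex.Gamma (b + n) / Complex.Gamma (c + n) -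
      ∑ m ∈ Finset.range (M + 1),
        (-1 : ℂ) ^ m * poch (c - a) m * poch (c - b) m / (m.factorial : ℂ) *
          Complex.Gamma (a + b - c - m + n)) =O[atTop]
      fun n : ℕ => Complex.Gamma (a + b - c - (M + 1) + n) := by
  have h := GammaRatioExpansion.remainder_isBigO a b c (M + 1)
  push_cast at h
  exact h
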